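/- Let F be a strongly convex Minkowski norm on E and L its Legendre map. Then the Fenchel–Young inequality ½F(y)² + ½F*(ξ)² ≥ ⟪ξ, y⟫ holds for all y, ξ ∈ E, and for every y ≠ 0 equality holds if and only if ξ = L(y). -/

import Mathlib

open RealInnerProductSpace Classical

/-- A strongly convex Minkowski norm on a real inner product space `E`:
continuous, nonnegative, smooth away from the origin, positively 1-homogeneous,
positive on nonzero vectors, and with positive definite Hessian of `½F²`
at every nonzero point. -/
structure StronglyConvexMinkowskiNorm (E : Type*) [NormedAddCommGroup E]
    [InnerProductSpace ℝ E] where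
  F : E → ℝ
  continuous : Continuous F
  nonneg : ∀ y : E, 0 ≤ F y
  smooth : ContDiffOn ℝ (⊤ : ℕ∞) F {(0 : E)}ᶜ
  homog : ∀ l : ℝ, 0 < l → ∀ y : E, F (l • y) = l * F y
  pos : ∀ y : E, y ≠ 0 → 0 < F y
  hess_posdef : ∀ y : E, y ≠ 0 → ∀ v : E, v ≠ 0 →
    0 < iteratedFDeriv ℝ 2 (fun z => (1 / 2) * F z ^ 2) y ![v, v]

/-- The Legendre map `L(y) = ∇(½F²)(y)` for `y ≠ 0`, with `L(0) = 0`. -/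
noncomputable def legendreMap {E : Type*} [NormedAddCommGroup E] [InnerProductSpace ℝ E]
    [FiniteDimensional ℝ E] (M : StronglyConvexMinkowskiNorm E) : E → E :=
  fun y => if y = 0 then 0 else gradient (fun z => (1 / 2) * M.F z ^ 2) y

/-- The dual norm `F*(ξ) = sup {⟪ξ, v⟫ : F(v) ≤ 1}`. -/
noncomputable def dualNorm {E : Type*} [NormedAddCommGroup E] [InnerProductSpace ℝ E]
    (M : StronglyConvexMinkowskiNorm E) (ξ : E) : ℝ :=
  sSup {r : ℝ | ∃ v : E, M.F v ≤ 1 ∧ r = ⟪ξ, v⟫}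

section Aux
variable {E : Type*} [NormedAddCommGroup E] [InnerProductSpace ℝ E]
variable (M : StronglyConvexMinkowskiNorm E)

lemma F_zero : M.F 0 = 0 := by
  have h := M.homog 2 (by norm_num) 0
  rw [smul_zero] at h
  linarith

lemma f_homog {l : ℝ} (hl : 0 < l) (y : E) :
    (1 / 2) * M.F (l • y) ^ 2 = l ^ 2 * ((1 / 2) * M.F y ^ 2) := by
  rw [M.homog l hl]; ring

lemma f_contDiffAt {y : E} (hy : y ≠ 0) :
    ContDiffAt ℝ (⊤ : ℕ∞) (fun z => (1 / 2) * M.F z ^ 2) y := by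
  have h : ContDiffOn ℝ (⊤ : ℕ∞) (fun z => (1 / 2 : ℝ) * M.F z ^ 2) {(0 : E)}ᶜ :=
    contDiffOn_const.mul (M.smooth.pow 2)
  exact h.contDiffAt (compl_singleton_mem_nhds hy)

lemma f_diffAt {y : E} (hy : y ≠ 0) :
    DifferentiableAt ℝ (fun z => (1 / 2) * M.F z ^ 2) y :=
  (f_contDiffAt M hy).differentiableAt (by simp)

lemma euler {y : E} (hy : y ≠ 0) :
    fderiv ℝ (fun z => (1 / 2) * M.F z ^ 2) y y = M.F y ^ 2 := by
  set f : E → ℝ := fun z => (1 / 2) * M.F z ^ 2 with hf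
  have h1 : HasDerivAt (fun t : ℝ => f (t • y)) (fderiv ℝ f y y) 1 := by
    have hc : HasDerivAt (fun t : ℝ => t • y) y 1 := by
      simpa using (hasDerivAt_id (1 : ℝ)).smul_const y
    have hd : HasFDerivAt f (fderiv ℝ f ((1:ℝ) • y)) ((1:ℝ) • y) := by
      rw [one_smul]; exact (f_diffAt M hy).hasFDerivAt
    have := hd.comp_hasDerivAt 1 hc
    rw [one_smul] at this; exact this
  have h2 : HasDerivAt (fun t : ℝ => t ^ 2 * f y) (2 * f y) 1 := by
    simpa using (hasDerivAt_pow 2 (1 : ℝ)).mul_const (f y)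
  have heq : (fun t : ℝ => f (t • y)) =ᶠ[nhds (1 : ℝ)] fun t => t ^ 2 * f y := by
    filter_upwards [Ioi_mem_nhds (show (0 : ℝ) < 1 by norm_num)] with t ht
    exact f_homog M ht y
  have h1' : HasDerivAt (fun t : ℝ => t ^ 2 * f y) (fderiv ℝ f y y) 1 :=
    h1.congr_of_eventuallyEq heq.symm
  have := h1'.unique h2
  rw [this, hf]; ring


lemma f_nonneg (v : E) : (0:ℝ) ≤ (1 / 2) * M.F v ^ 2 := by positivity

/-- Convexity-type inequality: `df_y(v) ≤ f(v) + f(y)` for `y ≠ 0`. -/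
lemma fund1 {y : E} (hy : y ≠ 0) (v : E) :
    fderiv ℝ (fun z => (1 / 2) * M.F z ^ 2) y v
      ≤ (1 / 2) * M.F v ^ 2 + (1 / 2) * M.F y ^ 2 := by
  set f : E → ℝ := fun z => (1 / 2) * M.F z ^ 2 with hf
  by_cases hcy : ∃ c : ℝ, c ≤ 0 ∧ v = c • y
  · obtain ⟨c, hc, rfl⟩ := hcy
    have h1 : fderiv ℝ f y (c • y) = c * M.F y ^ 2 := by
      rw [map_smul, smul_eq_mul, euler M hy]
    rw [h1]
    have := f_nonneg M (c • y)
    have := f_nonneg M y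
    have hle : c * M.F y ^ 2 ≤ 0 := mul_nonpos_of_nonpos_of_nonneg hc (sq_nonneg _)
    linarith
  · by_cases hvy : v = y
    · subst hvy
      rw [euler M hy]; linarith [sq_nonneg (M.F v)]
    · set w : E := v - y with hw
      have hwne : w ≠ 0 := sub_ne_zero.mpr hvy
      set c : ℝ → E := fun t => y + t • w with hcdef
      have hseg : ∀ t ∈ Set.Icc (0:ℝ) 1, c t ≠ 0 := by
        intro t ht h0
        rcases eq_or_lt_of_le ht.1 with h | h
        · rw [hcdef] at h0; simp [← h] at h0; exact hy h0
        · apply hcy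
          have hveq : t • v = (t - 1) • y := by
            have : y + t • (v - y) = 0 := h0
            rw [smul_sub] at this
            have : t • v = t • y - y := by
              have := this
              abel_nf at this ⊢
              linear_combination (norm := module) this
            rw [this, sub_smul, one_smul]
          refine ⟨t⁻¹ * (t - 1), ?_, ?_⟩
          · apply mul_nonpos_of_nonneg_of_nonpos (le_of_lt (inv_pos.mpr h))
            linarith [ht.2]
          · rw [mul_smul, ← hveq, inv_smul_smul₀ (ne_of_gt h)]
      have hc' : ∀ t : ℝ, HasDerivAt c w t := by
        intro t
        have := ((hasDerivAt_id t).smul_const w).const_add y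
        rw [one_smul] at this; exact this
      set ψ : ℝ → ℝ := fun t => fderiv ℝ f (c t) w with hψdef
      have hφ : ∀ t ∈ Set.Icc (0:ℝ) 1, HasDerivAt (fun s => f (c s)) (ψ t) t := by
        intro t ht
        exact (f_diffAt M (hseg t ht)).hasFDerivAt.comp_hasDerivAt t (hc' t)
      have hψ : ∀ t ∈ Set.Icc (0:ℝ) 1,
          HasDerivAt ψ ((fderiv ℝ (fderiv ℝ f) (c t) w) w) t := by
        intro t ht
        have hD : DifferentiableAt ℝ (fderiv ℝ f) (c t) := by
          have h2 : ContDiffAt ℝ 1 (fderiv ℝ f) (c t) :=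
            (f_contDiffAt M (hseg t ht)).fderiv_right (WithTop.coe_le_coe.mpr le_top)
          exact h2.differentiableAt one_ne_zero
        have := (hD.hasFDerivAt.comp_hasDerivAt t (hc' t)).clm_apply
          (hasDerivAt_const t w)
        simpa using this
      have hψnn : ∀ t ∈ Set.Icc (0:ℝ) 1, 0 ≤ (fderiv ℝ (fderiv ℝ f) (c t) w) w := by
        intro t ht
        have := M.hess_posdef (c t) (hseg t ht) w hwne
        have h2 : iteratedFDeriv ℝ 2 f (c t) ![w, w]
            = (fderiv ℝ (fderiv ℝ f) (c t) w) w := by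
          rw [iteratedFDeriv_two_apply]; simp
        rw [h2] at this
        exact le_of_lt this
      have hmono : MonotoneOn ψ (Set.Icc (0:ℝ) 1) := by
        apply monotoneOn_of_deriv_nonneg (convex_Icc 0 1)
        · intro t ht
          exact (hψ t ht).continuousAt.continuousWithinAt
        · intro t ht
          rw [interior_Icc] at ht
          exact (hψ t (Set.mem_Icc_of_Ioo ht)).differentiableAt.differentiableWithinAt
        · intro t ht
          rw [interior_Icc] at ht
          rw [(hψ t (Set.mem_Icc_of_Ioo ht)).deriv]
          exact hψnn t (Set.mem_Icc_of_Ioo ht)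
      obtain ⟨τ, hτ, hslope⟩ := exists_hasDerivAt_eq_slope (fun s => f (c s)) ψ
        (show (0:ℝ) < 1 by norm_num)
        (fun t ht => (hφ t ht).continuousAt.continuousWithinAt)
        (fun t ht => hφ t (Set.mem_Icc_of_Ioo ht))
      have hc0 : c 0 = y := by simp [hcdef]
      have hc1 : c 1 = v := by simp [hcdef, hw]
      have hψ0 : ψ 0 ≤ ψ τ := hmono (Set.left_mem_Icc.mpr zero_le_one)
        (Set.mem_Icc_of_Ioo hτ) (le_of_lt hτ.1)
      rw [hc0, hc1] at hslope
      simp only [sub_zero, div_one] at hslope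
      have hψ0v : ψ 0 = fderiv ℝ f y v - M.F y ^ 2 := by
        rw [hψdef]; simp only [hc0]
        rw [hw, map_sub, euler M hy]
      have : fderiv ℝ f y v - M.F y ^ 2 ≤ f v - f y := by
        rw [← hψ0v, ← hslope]; exact hψ0
      have hfy : f y = (1/2) * M.F y ^ 2 := rfl
      have hfv : f v = (1/2) * M.F v ^ 2 := rfl
      linarith [this]

/-- Fundamental inequality: `df_y(v) ≤ F(y)F(v)`. -/
lemma fund2 {y : E} (hy : y ≠ 0) (v : E) :
    fderiv ℝ (fun z => (1 / 2) * M.F z ^ 2) y v ≤ M.F y * M.F v := by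
  set f : E → ℝ := fun z => (1 / 2) * M.F z ^ 2 with hf
  by_cases hv : v = 0
  · subst hv
    rw [map_zero, F_zero M, mul_zero]
  · have hFy : 0 < M.F y := M.pos y hy
    have hFv : 0 < M.F v := M.pos v hv
    set s : ℝ := M.F y / M.F v with hs
    have hspos : 0 < s := div_pos hFy hFv
    have h := fund1 M hy (s • v)
    rw [map_smul, smul_eq_mul, f_homog M hspos v] at h
    have hs2 : s ^ 2 * ((1/2) * M.F v ^ 2) = (1/2) * M.F y ^ 2 := by
      rw [hs, div_pow]; field_simp
    rw [hs2] at h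
    have h2 : s * fderiv ℝ f y v ≤ M.F y ^ 2 := by linarith
    have h3 : fderiv ℝ f y v ≤ M.F y ^ 2 / s := (le_div_iff₀' hspos).mpr h2
    have h4 : M.F y ^ 2 / s = M.F y * M.F v := by
      rw [hs]; field_simp
    linarith [h3, h4.symm.le]

/-- There is `c > 0` with `c‖v‖ ≤ F v`. -/
lemma exists_lower_bound [FiniteDimensional ℝ E] :
    ∃ c : ℝ, 0 < c ∧ ∀ v : E, c * ‖v‖ ≤ M.F v := by
  by_cases hE : Subsingleton E
  · refine ⟨1, one_pos, fun v => ?_⟩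
    have : v = 0 := Subsingleton.elim v 0
    simp [this, F_zero M]
  · have : Nontrivial E := not_subsingleton_iff_nontrivial.mp hE
    have hcmp : IsCompact (Metric.sphere (0:E) 1) := isCompact_sphere 0 1
    have hne : (Metric.sphere (0:E) 1).Nonempty :=
      NormedSpace.sphere_nonempty.mpr zero_le_one
    obtain ⟨v₀, hv₀, hmin⟩ := hcmp.exists_isMinOn hne M.continuous.continuousOn
    have hv₀norm : ‖v₀‖ = 1 := by simpa using hv₀
    have hv₀ne : v₀ ≠ 0 := by
      intro h; rw [h, norm_zero] at hv₀norm; norm_num at hv₀norm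
    refine ⟨M.F v₀, M.pos v₀ hv₀ne, fun v => ?_⟩
    by_cases hv : v = 0
    · simp [hv, F_zero M]
    · have hn : 0 < ‖v‖ := norm_pos_iff.mpr hv
      have hu : (‖v‖⁻¹ • v) ∈ Metric.sphere (0:E) 1 := by
        simp [norm_smul, abs_of_pos (inv_pos.mpr hn), inv_mul_cancel₀ (ne_of_gt hn)]
      have h1 : M.F v₀ ≤ M.F (‖v‖⁻¹ • v) := hmin hu
      have h2 : M.F (‖v‖⁻¹ • v) = ‖v‖⁻¹ * M.F v := M.homog _ (inv_pos.mpr hn) v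
      rw [h2] at h1
      calc M.F v₀ * ‖v‖ ≤ (‖v‖⁻¹ * M.F v) * ‖v‖ := by
              exact mul_le_mul_of_nonneg_right h1 (le_of_lt hn)
        _ = M.F v := by field_simp
      
lemma dual_set_nonempty (ξ : E) :
    {r : ℝ | ∃ v : E, M.F v ≤ 1 ∧ r = ⟪ξ, v⟫}.Nonempty :=
  ⟨0, 0, by simp [F_zero M]⟩

lemma dual_set_bddAbove [FiniteDimensional ℝ E] (ξ : E) :
    BddAbove {r : ℝ | ∃ v : E, M.F v ≤ 1 ∧ r = ⟪ξ, v⟫} := by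
  obtain ⟨c, hc, hlb⟩ := exists_lower_bound M
  refine ⟨‖ξ‖ * c⁻¹, fun r hr => ?_⟩
  obtain ⟨v, hv, rfl⟩ := hr
  have h1 : ⟪ξ, v⟫ ≤ ‖ξ‖ * ‖v‖ := real_inner_le_norm ξ v
  have h2 : ‖v‖ ≤ c⁻¹ := by
    have h3 : c * ‖v‖ ≤ 1 := le_trans (hlb v) hv
    rw [inv_eq_one_div, le_div_iff₀ hc]
    linarith
  calc ⟪ξ, v⟫ ≤ ‖ξ‖ * ‖v‖ := h1
    _ ≤ ‖ξ‖ * c⁻¹ := mul_le_mul_of_nonneg_left h2 (norm_nonneg ξ)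

variable [FiniteDimensional ℝ E]

lemma inner_le_dual (ξ : E) {v : E} (hv : M.F v ≤ 1) : ⟪ξ, v⟫ ≤ dualNorm M ξ :=
  le_csSup (dual_set_bddAbove M ξ) ⟨v, hv, rfl⟩

lemma fenchel_mul (ξ y : E) : ⟪ξ, y⟫ ≤ dualNorm M ξ * M.F y := by
  by_cases hy : y = 0
  · simp [hy, F_zero M]
  · have hFy : 0 < M.F y := M.pos y hy
    have hu : M.F ((M.F y)⁻¹ • y) = 1 :=
      by rw [M.homog _ (inv_pos.mpr hFy) y, inv_mul_cancel₀ (ne_of_gt hFy)]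
    have h1 : ⟪ξ, (M.F y)⁻¹ • y⟫ ≤ dualNorm M ξ := inner_le_dual M ξ hu.le
    rw [inner_smul_right] at h1
    have h2 : (M.F y)⁻¹ * ⟪ξ, y⟫ * M.F y ≤ dualNorm M ξ * M.F y :=
      mul_le_mul_of_nonneg_right h1 hFy.le
    calc ⟪ξ, y⟫ = (M.F y)⁻¹ * ⟪ξ, y⟫ * M.F y := by field_simp
      _ ≤ dualNorm M ξ * M.F y := h2

lemma fenchel (ξ y : E) :
    ⟪ξ, y⟫ ≤ (1 / 2) * M.F y ^ 2 + (1 / 2) * dualNorm M ξ ^ 2 := by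
  have h := fenchel_mul M ξ y
  nlinarith [sq_nonneg (M.F y - dualNorm M ξ)]

lemma legendre_inner {y : E} (hy : y ≠ 0) (v : E) :
    ⟪legendreMap M y, v⟫ = fderiv ℝ (fun z => (1 / 2) * M.F z ^ 2) y v := by
  rw [legendreMap, if_neg hy, gradient]
  exact InnerProductSpace.toDual_symm_apply

lemma dual_legendre {y : E} (hy : y ≠ 0) : dualNorm M (legendreMap M y) = M.F y := by
  have hFy : 0 < M.F y := M.pos y hy
  apply le_antisymm
  · apply csSup_le (dual_set_nonempty M _)
    rintro r ⟨v, hv, rfl⟩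
    rw [legendre_inner M hy v]
    calc fderiv ℝ (fun z => (1 / 2) * M.F z ^ 2) y v ≤ M.F y * M.F v := fund2 M hy v
      _ ≤ M.F y * 1 := mul_le_mul_of_nonneg_left hv hFy.le
      _ = M.F y := mul_one _
  · apply le_csSup (dual_set_bddAbove M _)
    refine ⟨(M.F y)⁻¹ • y, ?_, ?_⟩
    · rw [M.homog _ (inv_pos.mpr hFy) y, inv_mul_cancel₀ (ne_of_gt hFy)]
    · rw [legendre_inner M hy, map_smul, smul_eq_mul, euler M hy]
      field_simp

end Aux

/-- Fenchel–Young inequality `½F(y)² + ½F*(ξ)² ≥ ⟪ξ, y⟫` for all `y, ξ`, with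
equality (for `y ≠ 0`) if and only if `ξ = L(y)`. -/
theorem fenchelYoung_and_equality_iff_legendreMap
    {E : Type*} [NormedAddCommGroup E] [InnerProductSpace ℝ E] [FiniteDimensional ℝ E]
    (M : StronglyConvexMinkowskiNorm E) :
    (∀ y ξ : E, ⟪ξ, y⟫ ≤ (1 / 2) * M.F y ^ 2 + (1 / 2) * dualNorm M ξ ^ 2) ∧
      ∀ y : E, y ≠ 0 → ∀ ξ : E,
        ((1 / 2) * M.F y ^ 2 + (1 / 2) * dualNorm M ξ ^ 2 = ⟪ξ, y⟫ ↔ ξ = legendreMap M y) := by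
  refine ⟨fun y ξ => fenchel M ξ y, fun y hy ξ => ⟨fun hEq => ?_, fun hξ => ?_⟩⟩
  · set f : E → ℝ := fun z => (1 / 2) * M.F z ^ 2 with hfdef
    have hFy : 0 < M.F y := M.pos y hy
    have hfm := fenchel_mul M ξ y
    have hd : dualNorm M ξ = M.F y := by
      nlinarith [sq_nonneg (M.F y - dualNorm M ξ)]
    have hinner : ⟪ξ, y⟫ = M.F y ^ 2 := by rw [← hEq, hd]; ring
    have hmin : IsLocalMin (fun v => (1/2) * M.F v ^ 2 - ⟪ξ, v⟫) y := by
      apply Filter.Eventually.of_forall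
      intro v
      have hv := fenchel M ξ v
      rw [hd] at hv
      simp only
      linarith [hv, hinner]
    have hgd : HasFDerivAt (fun v => (1/2) * M.F v ^ 2 - ⟪ξ, v⟫)
        (fderiv ℝ f y - innerSL ℝ ξ) y :=
      (f_diffAt M hy).hasFDerivAt.sub (innerSL ℝ ξ).hasFDerivAt
    have h0 := hmin.hasFDerivAt_eq_zero hgd
    have hDξ : fderiv ℝ f y = innerSL ℝ ξ := sub_eq_zero.mp h0
    symm
    apply ext_inner_right ℝ
    intro v
    rw [legendre_inner M hy v, hDξ]
    rfl
  · subst hξ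
    rw [dual_legendre M hy]
    have h1 : ⟪legendreMap M y, y⟫ = M.F y ^ 2 := by
      rw [legendre_inner M hy, euler M hy]
    rw [h1]; ring
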